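/- Potential-based reward shaping preserves optimal Q-values up to the potential: in a finite MDP with reward r, discount γ ∈ [0,1), and bounded potential Φ : S → ℝ, define r̃(s,a) = r(s,a) + γ·E_{s'∼P(·|s,a)}[Φ(s')] − Φ(s). Then the optimal action-value functions satisfy Q̃*(s,a) = Q*(s,a) − Φ(s) for all (s,a). -/

import Mathlib

/-!
The optimal Bellman operator is a `γ`-contraction for the sup distance, so it has at most one
fixed point. Shaping the reward by `Φ` conjugates it by the translation `Q ↦ Q - Φ`: the term
`γ·E[Φ(s')]` added to the reward cancels the one produced by `max_{a'} (Q(s',a') - Φ(s'))`.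
Hence `Q* - Φ` is a fixed point of the shaped operator, and by uniqueness it is `Q̃*`.
-/

open Finset Function

theorem ciSup_sub_const {ι : Type*} [Nonempty ι] {f : ι → ℝ} (hf : BddAbove (Set.range f))
    (c : ℝ) : ⨆ i, (f i - c) = (⨆ i, f i) - c := by
  simpa only [sub_eq_add_neg, OrderIso.addRight_apply] using
    ((OrderIso.addRight (-c)).map_ciSup hf).symm

theorem dist_ciSup_ciSup_le {ι : Type*} [Fintype ι] [Nonempty ι] (f g : ι → ℝ) :
    dist (⨆ i, f i) (⨆ i, g i) ≤ dist f g := by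
  have key : ∀ f g : ι → ℝ, (⨆ i, f i) ≤ (⨆ i, g i) + dist f g := fun f g =>
    ciSup_le fun i => by
      have hgi := le_ciSup (Finite.bddAbove_range g) i
      have hfg := dist_le_pi_dist f g i
      rw [Real.dist_eq, abs_le] at hfg
      linarith
  rw [Real.dist_eq, abs_sub_le_iff]
  constructor <;> linarith [key f g, key g f, dist_comm f g]

theorem dist_sum_mul_le {ι : Type*} [Fintype ι] {p : ι → ℝ} (hp0 : ∀ i, 0 ≤ p i)
    (hp1 : ∑ i, p i = 1) (v w : ι → ℝ) :
    dist (∑ i, p i * v i) (∑ i, p i * w i) ≤ dist v w :=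
  calc dist (∑ i, p i * v i) (∑ i, p i * w i)
      = |∑ i, p i * (v i - w i)| := by simp only [Real.dist_eq, mul_sub, sum_sub_distrib]
    _ ≤ ∑ i, |p i * (v i - w i)| := abs_sum_le_sum_abs _ _
    _ ≤ ∑ i, p i * dist v w := sum_le_sum fun i _ => by
        rw [abs_mul, abs_of_nonneg (hp0 i), ← Real.dist_eq]
        exact mul_le_mul_of_nonneg_left (dist_le_pi_dist v w i) (hp0 i)
    _ = dist v w := by rw [← sum_mul, hp1, one_mul]

section Bellman

variable {S A : Type*} [Fintype S]

noncomputable def bellmanOpt (r : S → A → ℝ) (γ : ℝ) (P : S → A → S → ℝ) (Q : S → A → ℝ) :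
    S → A → ℝ :=
  fun s a => r s a + γ * ∑ s', P s a s' * ⨆ a', Q s' a'

def shapedReward (r : S → A → ℝ) (γ : ℝ) (P : S → A → S → ℝ) (Φ : S → ℝ) : S → A → ℝ :=
  fun s a => r s a + γ * ∑ s', P s a s' * Φ s' - Φ s

variable [Fintype A] [Nonempty A]

theorem bellmanOpt_shapedReward_sub (r : S → A → ℝ) (γ : ℝ) (P : S → A → S → ℝ) (Φ : S → ℝ)
    (Q : S → A → ℝ) :
    bellmanOpt (shapedReward r γ P Φ) γ P (fun s a => Q s a - Φ s) =
      fun s a => bellmanOpt r γ P Q s a - Φ s := by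
  funext s a
  simp only [bellmanOpt, shapedReward, ciSup_sub_const (Finite.bddAbove_range _), mul_sub,
    sum_sub_distrib]
  ring

theorem contractingWith_bellmanOpt (r : S → A → ℝ) {γ : ℝ} (hγ0 : 0 ≤ γ) (hγ1 : γ < 1)
    {P : S → A → S → ℝ} (hP0 : ∀ s a s', 0 ≤ P s a s') (hP1 : ∀ s a, ∑ s', P s a s' = 1) :
    ContractingWith ⟨γ, hγ0⟩ (bellmanOpt r γ P) := by
  refine ⟨hγ1, LipschitzWith.of_dist_le_mul fun Q₁ Q₂ => ?_⟩
  refine (dist_pi_le_iff (by positivity)).2 fun s => (dist_pi_le_iff (by positivity)).2 fun a => ?_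
  calc dist (bellmanOpt r γ P Q₁ s a) (bellmanOpt r γ P Q₂ s a)
      = γ * dist (∑ s', P s a s' * ⨆ a', Q₁ s' a') (∑ s', P s a s' * ⨆ a', Q₂ s' a') := by
        simp only [bellmanOpt, Real.dist_eq, add_sub_add_left_eq_sub, ← mul_sub, abs_mul,
          abs_of_nonneg hγ0]
    _ ≤ γ * dist (fun s' => ⨆ a', Q₁ s' a') (fun s' => ⨆ a', Q₂ s' a') :=
        mul_le_mul_of_nonneg_left (dist_sum_mul_le (hP0 s a) (hP1 s a) _ _) hγ0
    _ ≤ γ * dist Q₁ Q₂ := by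
        refine mul_le_mul_of_nonneg_left ((dist_pi_le_iff dist_nonneg).2 fun s' => ?_) hγ0
        exact (dist_ciSup_ciSup_le _ _).trans (dist_le_pi_dist Q₁ Q₂ s')

end Bellman

theorem pbrs_optimal_q_shift_general {S A : Type*} [Fintype S] [Fintype A] [Nonempty A]
    (r : S → A → ℝ) (γ : ℝ) (hγ0 : 0 ≤ γ) (hγ1 : γ < 1)
    (P : S → A → S → ℝ) (hP0 : ∀ s a s', 0 ≤ P s a s') (hP1 : ∀ s a, ∑ s', P s a s' = 1)
    (Φ : S → ℝ)
    (Qstar Qtilde : S → A → ℝ)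
    (hQstar : ∀ s a, Qstar s a = r s a + γ * ∑ s', P s a s' * ⨆ a' : A, Qstar s' a')
    (hQtilde : ∀ s a, Qtilde s a =
      (r s a + γ * (∑ s', P s a s' * Φ s') - Φ s)
        + γ * ∑ s', P s a s' * ⨆ a' : A, Qtilde s' a') :
    ∀ s a, Qtilde s a = Qstar s a - Φ s := by
  have hstar : IsFixedPt (bellmanOpt r γ P) Qstar :=
    funext fun s => funext fun a => (hQstar s a).symm
  have htilde : IsFixedPt (bellmanOpt (shapedReward r γ P Φ) γ P) Qtilde :=
    funext fun s => funext fun a => (hQtilde s a).symm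
  have hshift : IsFixedPt (bellmanOpt (shapedReward r γ P Φ) γ P) fun s a => Qstar s a - Φ s := by
    rw [IsFixedPt, bellmanOpt_shapedReward_sub, hstar.eq]
  have hunique := (contractingWith_bellmanOpt _ hγ0 hγ1 hP0 hP1).fixedPoint_unique' htilde hshift
  exact fun s a => congrFun (congrFun hunique s) a

/-- Potential-based reward shaping preserves optimal Q-values up to the potential:
if `Qstar` is a fixed point of the optimal Bellman operator with reward `r`, and
`Qtilde` is a fixed point of the optimal Bellman operator with shaped reward
`r̃(s,a) = r(s,a) + γ·E[Φ(s')] − Φ(s)`, then `Qtilde = Qstar − Φ`. -/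
theorem pbrs_optimal_q_shift {S A : Type*} [Fintype S] [Nonempty S] [Fintype A] [Nonempty A]
    (r : S → A → ℝ) (γ : ℝ) (hγ0 : 0 ≤ γ) (hγ1 : γ < 1)
    (P : S → A → S → ℝ) (hP0 : ∀ s a s', 0 ≤ P s a s') (hP1 : ∀ s a, ∑ s', P s a s' = 1)
    (Φ : S → ℝ)
    (Qstar Qtilde : S → A → ℝ)
    (hQstar : ∀ s a, Qstar s a = r s a + γ * ∑ s', P s a s' * ⨆ a' : A, Qstar s' a')
    (hQtilde : ∀ s a, Qtilde s a =
      (r s a + γ * (∑ s', P s a s' * Φ s') - Φ s)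
        + γ * ∑ s', P s a s' * ⨆ a' : A, Qtilde s' a') :
    ∀ s a, Qtilde s a = Qstar s a - Φ s :=
  pbrs_optimal_q_shift_general r γ hγ0 hγ1 P hP0 hP1 Φ Qstar Qtilde hQstar hQtilde
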